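/- Let G be a compact Hausdorff topological group acting continuously on a Hausdorff space X, and let U be a G-categorical subset of X. If U' = U ∩ X^G is nonempty, then U' is a G-categorical subset of X^G (with the subspace topology and the restricted, trivial, G-action); in particular the inclusion of U' in X^G is G-contractible to a single fixed point. -/

import Mathlib

open Set unitInterval

/-- The orbit of a point under a `SMul` of `G` on `X`. -/
def smulOrbit (G : Type*) {X : Type*} [SMul G X] (x : X) : Set X :=
  Set.range fun g : G => g • x

/-- A subset `U` of a `G`-space `X` is `G`-invariant if `GU ⊆ U`. -/
def IsInvariantSet (G : Type*) {X : Type*} [SMul G X] (U : Set X) : Prop :=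
  ∀ g : G, ∀ x ∈ U, g • x ∈ U

/-- `H : U × [0,1] → X` is a `G`-homotopy: it is continuous and
`g • H(x,t) = H(g • x, t)` whenever both sides make sense. -/
def IsGHomotopy (G : Type*) {X : Type*} [SMul G X] [TopologicalSpace X]
    (U : Set X) (H : U × I → X) : Prop :=
  Continuous H ∧
    ∀ (g : G) (x : U) (hgx : g • (x : X) ∈ U) (t : I),
      g • H (x, t) = H (⟨g • (x : X), hgx⟩, t)

/-- A `G`-invariant open subset `U` of `X` is `G`-categorical if there is a `G`-homotopy
`H : U × [0,1] → X` starting at the inclusion and ending inside a single orbit. -/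
def IsGCategorical (G : Type*) {X : Type*} [SMul G X] [TopologicalSpace X] (U : Set X) : Prop :=
  IsOpen U ∧ IsInvariantSet G U ∧
    ∃ H : U × I → X, IsGHomotopy G U H ∧ (∀ x : U, H (x, 0) = x) ∧
      ∃ z : X, ∀ x : U, H (x, 1) ∈ smulOrbit G z

/-- The equivariant Lusternik–Schnirelmann category of a `G`-space: the least number of
`G`-categorical open sets covering `X`, as an element of `ℕ∞` (`⊤` if no finite cover exists). -/
noncomputable def eqvCat (G X : Type*) [SMul G X] [TopologicalSpace X] : ℕ∞ :=
  sInf {c : ℕ∞ | ∃ n : ℕ, c = n ∧ ∃ U : Fin n → Set X,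
    (∀ i, IsGCategorical G (U i)) ∧ (⋃ i, U i) = Set.univ}

/-- A subset `U` of `X` is categorical if it is open and contractible to a point within `X`. -/
def IsCategoricalSet {X : Type*} [TopologicalSpace X] (U : Set X) : Prop :=
  IsOpen U ∧ ∃ H : U × I → X, Continuous H ∧ (∀ x : U, H (x, 0) = x) ∧
    ∃ p : X, ∀ x : U, H (x, 1) = p

/-- The (classical) Lusternik–Schnirelmann category of `X`, valued in `ℕ∞`. -/
noncomputable def LScat (X : Type*) [TopologicalSpace X] : ℕ∞ :=
  sInf {c : ℕ∞ | ∃ n : ℕ, c = n ∧ ∃ U : Fin n → Set X,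
    (∀ i, IsCategoricalSet (U i)) ∧ (⋃ i, U i) = Set.univ}

/-- The fixed point set `X^G`. -/
def fixedPts (G X : Type*) [SMul G X] : Set X := {x : X | ∀ g : G, g • x = x}

/-- The (trivial) restriction of the `G`-action to the fixed point set `X^G`. -/
def fixedSMul (G X : Type*) [SMul G X] : SMul G ↥(fixedPts G X) := ⟨fun _ x => x⟩

/-
A `G`-homotopy moves a fixed point only through fixed points, so the given contraction of `U`
restricts to a homotopy of `U ∩ X^G` inside `X^G`. Its end points lie in one orbit and are
fixed, and an orbit containing a fixed point is that single point; so the restricted homotopy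
ends at one fixed point.
-/

theorem IsGHomotopy.apply_mem_fixedPts {G X : Type*} [SMul G X] [TopologicalSpace X]
    {U : Set X} {H : U × I → X} (hH : IsGHomotopy G U H) {x : U} (hx : (x : X) ∈ fixedPts G X)
    (t : I) : H (x, t) ∈ fixedPts G X := fun g => by
  rw [hH.2 g x ((hx g).symm ▸ x.2) t]
  congr
  exact hx g

theorem eq_of_mem_smulOrbit_of_mem_fixedPts {G X : Type*} [Group G] [MulAction G X]
    {z a b : X} (ha : a ∈ smulOrbit G z) (hfix : a ∈ fixedPts G X) (hb : b ∈ smulOrbit G z) :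
    b = a := by
  have hb' : b ∈ MulAction.orbit G a := (MulAction.orbit_eq_iff.2 ha) ▸ hb
  obtain ⟨g, rfl⟩ := hb'
  exact hfix g

theorem isGCategorical_inter_fixedPts_general
    {G X : Type*} [Group G] [TopologicalSpace X] [MulAction G X]
    (U : Set X) (hU : IsGCategorical G U) (hne : (U ∩ fixedPts G X).Nonempty) :
    @IsGCategorical G ↥(fixedPts G X) (fixedSMul G X) inferInstance
      {x : ↥(fixedPts G X) | (x : X) ∈ U} := by
  obtain ⟨hopen, -, H, hH, H0, z, H1⟩ := hU
  obtain ⟨x₀, hx₀U, hx₀F⟩ := hne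
  let H' : {x : ↥(fixedPts G X) | (x : X) ∈ U} × I → fixedPts G X := fun p =>
    ⟨H (⟨p.1.1, p.1.2⟩, p.2), hH.apply_mem_fixedPts p.1.1.2 p.2⟩
  refine ⟨hopen.preimage continuous_subtype_val, fun _ _ hx => hx, H', ⟨?_, fun _ _ _ _ => rfl⟩,
    fun x => Subtype.ext (H0 _), H' (⟨⟨x₀, hx₀F⟩, hx₀U⟩, 1), fun x => ⟨1, Subtype.ext ?_⟩⟩
  · exact (hH.1.comp (by fun_prop)).subtype_mk _
  · exact (eq_of_mem_smulOrbit_of_mem_fixedPts (H1 _) (hH.apply_mem_fixedPts hx₀F 1) (H1 _)).symm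

/-- Let `G` be a compact Hausdorff topological group acting continuously on a
Hausdorff space `X`, and let `U` be a `G`-categorical subset of `X`. If `U' = U ∩ X^G` is
nonempty, then `U'` is a `G`-categorical subset of `X^G` (with the subspace topology and the
restricted, trivial, `G`-action); in particular the inclusion of `U'` in `X^G` is
`G`-contractible to a single fixed point. -/
theorem isGCategorical_inter_fixedPts
    {G X : Type*} [Group G] [TopologicalSpace G] [IsTopologicalGroup G] [CompactSpace G]
    [T2Space G] [TopologicalSpace X] [T2Space X] [MulAction G X] [ContinuousSMul G X]
    (U : Set X) (hU : IsGCategorical G U) (hne : (U ∩ fixedPts G X).Nonempty) :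
    @IsGCategorical G ↥(fixedPts G X) (fixedSMul G X) inferInstance
      {x : ↥(fixedPts G X) | (x : X) ∈ U} :=
  isGCategorical_inter_fixedPts_general U hU hne
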